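/- With S̃ = c₀ ρ^{−2/3} cos(2θ/3) + c₀ w near a corner, where ρ^{1/3}|∇w| ≤ m₂ on Ω̄, for every M > 0 there exists ε₂ > 0 such that for all ε ∈ (0,ε₂), the function θ ↦ S̃(ε, θ) is strictly decreasing on the set of angles θ with ρ^{−2/3}|cos(2θ/3)| ≤ M (i.e. on ∂B(S_i,ε) ∩ Ω outside U_i^M). -/

import Mathlib

/-!
On the arc where `K |cos(2θ/3)| ≤ M` with `K = ε^{-2/3}`, the cosine is small, so
`sin(2θ/3) ≥ 1 - |cos(2θ/3)|` is bounded below and the angular derivative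
`-(2/3) c₀ K sin(2θ/3)` of the leading term is of order `-K`. The perturbation contributes
at most `c₀ m₂ K⁻¹`, which loses against `K` once `ε` is small. The arc is an interval
because `cos(2θ/3)` is antitone on `[0, 3π/2]`, so a negative derivative gives strict
monotonicity.
-/

open Real Set Filter Topology

theorem Real.one_sub_abs_cos_le_sin {x : ℝ} (h₀ : 0 ≤ x) (hπ : x ≤ π) :
    1 - |cos x| ≤ sin x := by
  have hsin : 0 ≤ sin x := sin_nonneg_of_nonneg_of_le_pi h₀ hπ
  have hcos : |cos x| ≤ 1 := abs_cos_le_one x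
  nlinarith [sin_sq_add_cos_sq x, sq_abs (cos x), abs_nonneg (cos x)]

theorem antitoneOn_cos_two_mul_div_three :
    AntitoneOn (fun θ : ℝ => cos (2 * θ / 3)) (Icc 0 (3 * π / 2)) := by
  intro x hx y hy hxy
  exact antitoneOn_cos ⟨by linarith [hx.1], by linarith [hx.2]⟩
    ⟨by linarith [hy.1], by linarith [hy.2]⟩ (by linarith)

theorem Set.OrdConnected.setOf_mul_abs_le_of_antitoneOn {s : Set ℝ} {f : ℝ → ℝ}
    (hs : s.OrdConnected) (hf : AntitoneOn f s) {K : ℝ} (hK : 0 ≤ K) (M : ℝ) :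
    {x | x ∈ s ∧ K * |f x| ≤ M}.OrdConnected := by
  refine ⟨fun x hx y hy z hz => ?_⟩
  have hzs : z ∈ s := hs.out hx.1 hy.1 hz
  refine ⟨hzs, ?_⟩
  have hfz : |f z| ≤ max |f y| |f x| :=
    abs_le_max_abs_abs (hf hzs hy.1 hz.2) (hf hx.1 hzs hz.1)
  calc K * |f z| ≤ K * max |f y| |f x| := mul_le_mul_of_nonneg_left hfz hK
    _ = max (K * |f y|) (K * |f x|) := mul_max_of_nonneg _ _ hK
    _ ≤ M := max_le hy.2 hx.2

theorem strictAntiOn_mul_cos_add {c₀ K m₂ M : ℝ} {g : ℝ → ℝ} (hc₀ : 0 < c₀) (hK : 0 < K)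
    (hg : Differentiable ℝ g) (hg' : ∀ θ, |deriv g θ| ≤ m₂ * K⁻¹)
    (hMK : 2 * M ≤ K) (hm₂K : 3 * m₂ < K * K) :
    StrictAntiOn (fun θ : ℝ => c₀ * K * cos (2 * θ / 3) + c₀ * g θ)
      {θ : ℝ | θ ∈ Icc 0 (3 * π / 2) ∧ K * |cos (2 * θ / 3)| ≤ M} := by
  have hconvex : Convex ℝ {θ : ℝ | θ ∈ Icc 0 (3 * π / 2) ∧ K * |cos (2 * θ / 3)| ≤ M} :=
    (ordConnected_Icc.setOf_mul_abs_le_of_antitoneOn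
      antitoneOn_cos_two_mul_div_three hK.le M).convex
  have hderiv : ∀ θ, HasDerivAt (fun θ : ℝ => c₀ * K * cos (2 * θ / 3) + c₀ * g θ)
      (c₀ * K * (-sin (2 * θ / 3) * (2 / 3)) + c₀ * deriv g θ) θ := fun θ =>
    ((((hasDerivAt_id θ).const_mul 2).div_const 3).cos.const_mul (c₀ * K)).add
      ((hg θ).hasDerivAt.const_mul c₀) |>.congr_deriv (by simp)
  refine strictAntiOn_of_deriv_neg hconvex
    (fun θ _ => (hderiv θ).continuousAt.continuousWithinAt) fun θ hθ => ?_
  obtain ⟨⟨hθ₀, hθπ⟩, hθM⟩ := interior_subset hθ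
  have hcos : |cos (2 * θ / 3)| ≤ 1 / 2 := by
    rw [le_div_iff₀ two_pos]
    nlinarith [abs_nonneg (cos (2 * θ / 3))]
  have hsin : 1 / 2 ≤ sin (2 * θ / 3) := by
    linarith [one_sub_abs_cos_le_sin (x := 2 * θ / 3) (by linarith) (by linarith)]
  have hperturb : deriv g θ < K / 3 := by
    calc deriv g θ ≤ m₂ * K⁻¹ := (abs_le.1 (hg' θ)).2
      _ < K / 3 := by
        rw [← div_eq_mul_inv, div_lt_div_iff₀ hK three_pos]
        linarith
  rw [(hderiv θ).deriv]
  nlinarith [mul_pos hc₀ hK]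

theorem stmt9_general (c₀ m₂ : ℝ) (hc₀ : 0 < c₀)
    (w : ℝ → ℝ → ℝ)
    (hwd : ∀ ρ θ : ℝ, 0 < ρ → DifferentiableAt ℝ (w ρ) θ)
    (hw : ∀ ρ θ : ℝ, 0 < ρ → |deriv (w ρ) θ| ≤ m₂ * ρ ^ ((2:ℝ)/3))
    (M : ℝ) :
    ∃ ε₂ > (0:ℝ), ∀ ε ∈ Set.Ioo (0:ℝ) ε₂,
      StrictAntiOn (fun θ : ℝ => c₀ * ε ^ (-(2:ℝ)/3) * Real.cos (2 * θ / 3) + c₀ * w ε θ)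
        {θ : ℝ | θ ∈ Set.Icc (0:ℝ) (3 * π / 2) ∧
          ε ^ (-(2:ℝ)/3) * |Real.cos (2 * θ / 3)| ≤ M} := by
  have hK : Tendsto (fun ε : ℝ => ε ^ (-(2:ℝ)/3)) (𝓝[>] 0) atTop :=
    tendsto_rpow_neg_nhdsGT_zero (by norm_num)
  have hsmall : ∀ᶠ ε in 𝓝[>] 0, 2 * M ≤ ε ^ (-(2:ℝ)/3) ∧
      3 * m₂ < ε ^ (-(2:ℝ)/3) * ε ^ (-(2:ℝ)/3) :=
    (hK.eventually_ge_atTop _).and ((hK.atTop_mul_atTop₀ hK).eventually_gt_atTop _)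
  obtain ⟨ε₂, hε₂, hsub⟩ := mem_nhdsGT_iff_exists_Ioo_subset.1 hsmall
  refine ⟨ε₂, hε₂, fun ε hε => ?_⟩
  obtain ⟨hMK, hm₂K⟩ := hsub hε
  have hεpos : 0 < ε := hε.1
  have hinv : ε ^ ((2:ℝ)/3) = (ε ^ (-(2:ℝ)/3))⁻¹ := by
    rw [neg_div, rpow_neg hεpos.le, inv_inv]
  exact strictAntiOn_mul_cos_add hc₀ (rpow_pos_of_pos hεpos _)
    (fun θ => hwd ε θ hεpos) (fun θ => hinv ▸ hw ε θ hεpos) hMK hm₂K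

/-- Near a nonconvex corner write `S̃(ρ,θ) = c₀ ρ^{−2/3} cos(2θ/3) + c₀ w(ρ,θ)` in
polar coordinates, where the angular derivative of `w` satisfies
`|∂_θ w(ρ,θ)| ≤ m₂ ρ^{2/3}` (coming from `ρ^{1/3}|∇w| ≤ m₂`). For every `M > 0` there
is `ε₂ > 0` such that for all `ε ∈ (0,ε₂)` the function `θ ↦ S̃(ε,θ)` is strictly
decreasing on the set of angles `θ ∈ [0, 3π/2]` with `ε^{−2/3}|cos(2θ/3)| ≤ M`
(that is, on `∂B(S_i,ε) ∩ Ω` outside `U_i^M`). -/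
theorem stmt9 (c₀ m₂ : ℝ) (hc₀ : 0 < c₀) (hm₂ : 0 ≤ m₂)
    (w : ℝ → ℝ → ℝ)
    (hwd : ∀ ρ θ : ℝ, 0 < ρ → DifferentiableAt ℝ (w ρ) θ)
    (hw : ∀ ρ θ : ℝ, 0 < ρ → |deriv (w ρ) θ| ≤ m₂ * ρ ^ ((2:ℝ)/3))
    (M : ℝ) (hM : 0 < M) :
    ∃ ε₂ > (0:ℝ), ∀ ε ∈ Set.Ioo (0:ℝ) ε₂,
      StrictAntiOn (fun θ : ℝ => c₀ * ε ^ (-(2:ℝ)/3) * Real.cos (2 * θ / 3) + c₀ * w ε θ)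
        {θ : ℝ | θ ∈ Set.Icc (0:ℝ) (3 * π / 2) ∧
          ε ^ (-(2:ℝ)/3) * |Real.cos (2 * θ / 3)| ≤ M} :=
  stmt9_general c₀ m₂ hc₀ w hwd hw M
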